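/- arXiv:2403.10644 — 2 statements merged into one kernel-verified Lean document; each statement's English description precedes it below -/
import Mathlib

section
/- Let A, B, C, D be M×L complex matrices, let b_1, b_2, b_1', b_2' be complex scalars, and let n_1, n_2, n_3 be nonnegative integers. Form the M×(2L+n_1+n_2+n_3) matrices X = [0^{n_1} ∥ b_1·A ∥ 0^{n_2} ∥ b_2·C ∥ 0^{n_3}] and Y = [0^{n_1} ∥ b_1'·B ∥ 0^{n_2} ∥ b_2'·D ∥ 0^{n_3}]. Then for every integer shift τ, C(X,Y)(τ) = b_1·conj(b_1')·C(A,B)(τ) + b_2·conj(b_2')·C(C,D)(τ) + b_2·conj(b_1')·C(C,B)(τ−L−n_2) + b_1·conj(b_2')·C(A,D)(τ+L+n_2). -/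
/-! Extended by zero to `ℤ`, each row of `Rmat Cs b n` is `∑ p, b p • (row of Cs p shifted by
Roff p)`. The ACCF is sesquilinear, and shifting both arguments by `o` and `o'` only shifts the lag
by `o' - o`, so the ACCF of two such codes is the double sum over block pairs `(p, q)` of the
block ACCFs at lag `τ - Roff p + Roff q`. For two blocks, `Roff 1 - Roff 0 = L + n₂`. -/

open scoped BigOperators ComplexConjugate

noncomputable section

/-- Zero-extension of a finite complex sequence to an integer-indexed sequence. -/
def zext {L : ℕ} (a : Fin L → ℂ) (i : ℤ) : ℂ :=
  if h : 0 ≤ i ∧ i < (L : ℤ) then a ⟨i.toNat, by omega⟩ else 0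

/-- Aperiodic cross-correlation function (ACCF) of two length-`L` complex sequences. -/
def accf {L : ℕ} (a b : Fin L → ℂ) (τ : ℤ) : ℂ :=
  ∑ i : Fin L, zext a ((i : ℤ) + τ) * conj (b i)

/-- Periodic cross-correlation function of two length-`N` complex sequences. -/
def pccf {N : ℕ} (a b : Fin N → ℂ) (τ : ℤ) : ℂ :=
  accf a b τ + accf a b (τ - (N : ℤ))

/-- ACCF of two `M × L` codes (sum of row-wise ACCFs). -/
def codeACCF {M L : ℕ} (C D : Fin M → Fin L → ℂ) (τ : ℤ) : ℂ :=
  ∑ ν : Fin M, accf (C ν) (D ν) τ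

/-- Periodic cross-correlation of two `M × N` codes. -/
def codePCCF {M N : ℕ} (C D : Fin M → Fin N → ℂ) (τ : ℤ) : ℂ :=
  ∑ ν : Fin M, pccf (C ν) (D ν) τ

/-- `C : Fin M → (Fin M → Fin L → ℂ)` is an `(M,L)`-CCC. -/
def IsCCC {M L : ℕ} (C : Fin M → Fin M → Fin L → ℂ) : Prop :=
  (∀ k₁ k₂ : Fin M, ∀ τ : ℤ, (k₁ ≠ k₂ ∨ τ ≠ 0) → codeACCF (C k₁) (C k₂) τ = 0) ∧
  (∀ k : Fin M, codeACCF (C k) (C k) 0 = (M : ℂ) * (L : ℂ))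

/-- Starting column of the `p`-th data block in the construction `R`:
the block `b_{p+1}·C_{p+1}` starts after the zero blocks `n_1, …, n_{p+1}` and the
previous `p` data blocks of width `L`. -/
def Roff {P : ℕ} (L : ℕ) (n : Fin (P + 1) → ℕ) (p : Fin P) : ℕ :=
  (∑ i : Fin (P + 1), if (i : ℕ) ≤ (p : ℕ) then n i else 0) + (p : ℕ) * L

/-- The construction
`R(C_1,…,C_P; b) = [0^{n_1} ∥ b_1·C_1 ∥ 0^{n_2} ∥ b_2·C_2 ∥ … ∥ 0^{n_P} ∥ b_P·C_P ∥ 0^{n_{P+1}}]`,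
an `M × (P·L + n)` matrix.  (The data blocks are pairwise disjoint, so the column `x` entry
is `b_p · (C_p)_{r,j}` if `x = Roff p + j` for (the unique) such `p, j`, and `0` otherwise.) -/
def Rmat {M L P : ℕ} (Cs : Fin P → Fin M → Fin L → ℂ) (b : Fin P → ℂ)
    (n : Fin (P + 1) → ℕ) : Fin M → Fin (P * L + ∑ i, n i) → ℂ :=
  fun r x => ∑ p : Fin P, ∑ j : Fin L,
    if (x : ℕ) = Roff L n p + (j : ℕ) then b p * Cs p r j else 0

/-- For `t = νP + μ` (0-indexed), the index `νP + p` of the `p`-th constituent code. -/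
def blockIdx {M P : ℕ} (hP : P ∣ M) (t : Fin M) (p : Fin P) : Fin M :=
  ⟨(t : ℕ) / P * P + (p : ℕ), by
    obtain ⟨k, rfl⟩ := hP
    have hPpos : 0 < P := p.pos
    have h1 : (t : ℕ) / P < k := Nat.div_lt_of_lt_mul t.isLt
    have h4 : (p : ℕ) < P := p.isLt
    nlinarith [h1, h4]⟩

/-- Condition (13) of the paper: for `j₁ ≠ j₂`, `π_{j₁}(i₁P+μ) ≠ π_{j₂}(i₂P+μ)`;
equivalently, images of indices with the same residue mod `P` differ. -/
def Cond13 {M P : ℕ} (π : Fin P → Equiv.Perm (Fin M)) : Prop :=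
  ∀ j₁ j₂ : Fin P, j₁ ≠ j₂ → ∀ s t : Fin M, (s : ℕ) % P = (t : ℕ) % P →
    π j₁ s ≠ π j₂ t

/-- Condition (14) of the paper: if `π_{j₁}(i₁P+μ₁) = π_{j₂}(i₂P+μ₂)` for `j₁ ≠ j₂`, then
`π_{j₁}(i₁P+μ₁+α) ≠ π_{j₂}(i₂P+μ₂+α)` for every nonzero shift `α` keeping both positions
inside their blocks. -/
def Cond14 {M P : ℕ} (π : Fin P → Equiv.Perm (Fin M)) : Prop :=
  ∀ j₁ j₂ : Fin P, j₁ ≠ j₂ → ∀ s t : Fin M, π j₁ s = π j₂ t →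
    ∀ α : ℤ, α ≠ 0 →
      0 ≤ ((s : ℕ) : ℤ) % (P : ℤ) + α → ((s : ℕ) : ℤ) % (P : ℤ) + α < (P : ℤ) →
      0 ≤ ((t : ℕ) : ℤ) % (P : ℤ) + α → ((t : ℕ) : ℤ) % (P : ℤ) + α < (P : ℤ) →
      ∀ s' t' : Fin M, ((s' : ℕ) : ℤ) = ((s : ℕ) : ℤ) + α → ((t' : ℕ) : ℤ) = ((t : ℕ) : ℤ) + α →
        π j₁ s' ≠ π j₂ t'

section ZeroExtension

variable {L : ℕ}

lemma zext_natCast (a : Fin L → ℂ) (i : Fin L) : zext a ((i : ℕ) : ℤ) = a i := by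
  simp [zext]

lemma zext_eq_zero (a : Fin L → ℂ) {x : ℤ} (h : ¬(0 ≤ x ∧ x < L)) : zext a x = 0 :=
  dif_neg h

lemma zext_const_mul (c : ℂ) (a : Fin L → ℂ) (x : ℤ) :
    zext (fun j => c * a j) x = c * zext a x := by
  unfold zext
  split <;> simp

lemma sum_ite_eq_zext_sub (f : Fin L → ℂ) (m c : ℕ) :
    (∑ j : Fin L, if m = c + (j : ℕ) then f j else 0) = zext f ((m : ℤ) - c) := by
  by_cases h : c ≤ m ∧ m < c + L
  · rw [Finset.sum_eq_single_of_mem (⟨m - c, by omega⟩ : Fin L) (Finset.mem_univ _)]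
    · rw [if_pos (by simp; omega), zext, dif_pos (by omega)]
      congr
      omega
    · intro j _ hj
      exact if_neg fun hm => hj (Fin.ext (by simp; omega))
  · rw [zext_eq_zero _ (by omega)]
    exact Finset.sum_eq_zero fun j _ => if_neg (by omega)

lemma accf_eq_sum_zext (a b : Fin L → ℂ) (τ : ℤ) {s : Finset ℤ}
    (hs : Finset.Ico 0 (L : ℤ) ⊆ s) :
    accf a b τ = ∑ i ∈ s, zext a (i + τ) * conj (zext b i) := by
  rw [← Finset.sum_subset hs fun i _ hi => by
    rw [zext_eq_zero b (by simpa using hi), map_zero, mul_zero]]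
  refine Finset.sum_nbij (fun i : Fin L => ((i : ℕ) : ℤ)) (by simp) ?_ ?_ ?_
  · intro i _ j _ hij
    exact Fin.ext (by simpa using hij)
  · intro i hi
    simp only [Finset.coe_Ico, Set.mem_Ico] at hi
    exact ⟨⟨i.toNat, by omega⟩, Finset.mem_coe.2 (Finset.mem_univ _), by simp; omega⟩
  · intro i _
    rw [zext_natCast]

lemma sum_zext_sub_mul_conj_zext_sub (a b : Fin L → ℂ) {τ p q σ : ℤ} (hσ : τ - p + q = σ)
    {s : Finset ℤ} (hs : Finset.Ico q (q + L) ⊆ s) :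
    ∑ i ∈ s, zext a (i + τ - p) * conj (zext b (i - q)) = accf a b σ := by
  have hs' : Finset.Ico 0 (L : ℤ) ⊆ s.map (Equiv.subRight q).toEmbedding := by
    intro j hj
    simp only [Finset.mem_Ico] at hj
    exact Finset.mem_map_equiv.2 (hs (by simp; omega))
  rw [accf_eq_sum_zext a b σ hs', Finset.sum_map]
  refine Finset.sum_congr rfl fun i _ => ?_
  simp only [Equiv.toEmbedding_apply, Equiv.subRight_apply, ← hσ]
  ring_nf

end ZeroExtension

section Rmat

variable {M L P : ℕ}

lemma Roff_add_le (n : Fin (P + 1) → ℕ) (p : Fin P) : Roff L n p + L ≤ P * L + ∑ i, n i := by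
  have hn : (∑ i : Fin (P + 1), if (i : ℕ) ≤ (p : ℕ) then n i else 0) ≤ ∑ i, n i :=
    Finset.sum_le_sum fun i _ => by split_ifs <;> simp
  have hp : (p : ℕ) * L + L ≤ P * L := by
    rw [← Nat.succ_mul]
    exact Nat.mul_le_mul_right L p.isLt
  unfold Roff
  omega

lemma zext_Rmat (Cs : Fin P → Fin M → Fin L → ℂ) (b : Fin P → ℂ) (n : Fin (P + 1) → ℕ)
    (r : Fin M) (x : ℤ) :
    zext (Rmat Cs b n r) x = ∑ p, b p * zext (Cs p r) (x - Roff L n p) := by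
  by_cases hx : 0 ≤ x ∧ x < ((P * L + ∑ i, n i : ℕ) : ℤ)
  · rw [zext, dif_pos hx]
    refine Finset.sum_congr rfl fun p _ => ?_
    rw [sum_ite_eq_zext_sub (fun j => b p * Cs p r j), zext_const_mul, Int.toNat_of_nonneg hx.1]
  · rw [zext_eq_zero _ hx]
    refine (Finset.sum_eq_zero fun p _ => ?_).symm
    have := Roff_add_le (L := L) n p
    rw [zext_eq_zero _ (by omega), mul_zero]

lemma accf_Rmat (Cs Ds : Fin P → Fin M → Fin L → ℂ) (b b' : Fin P → ℂ) (n : Fin (P + 1) → ℕ)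
    (r : Fin M) (τ : ℤ) :
    accf (Rmat Cs b n r) (Rmat Ds b' n r) τ =
      ∑ p, ∑ q, b p * conj (b' q) *
        accf (Cs p r) (Ds q r) (τ - Roff L n p + Roff L n q) := by
  rw [accf_eq_sum_zext _ _ τ (subset_refl _)]
  simp only [zext_Rmat, map_sum, map_mul, Finset.sum_mul_sum, Finset.sum_comm (s := Finset.Ico _ _)]
  refine Finset.sum_congr rfl fun p _ => Finset.sum_congr rfl fun q _ => ?_
  have hq : Finset.Ico (Roff L n q : ℤ) (Roff L n q + L) ⊆ Finset.Ico 0 (P * L + ∑ i, n i : ℕ) :=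
    Finset.Ico_subset_Ico (by positivity) (by exact_mod_cast Roff_add_le n q)
  rw [← sum_zext_sub_mul_conj_zext_sub _ _ rfl hq, Finset.mul_sum]
  refine Finset.sum_congr rfl fun i _ => ?_
  ring

lemma codeACCF_Rmat (Cs Ds : Fin P → Fin M → Fin L → ℂ) (b b' : Fin P → ℂ)
    (n : Fin (P + 1) → ℕ) (τ : ℤ) :
    codeACCF (Rmat Cs b n) (Rmat Ds b' n) τ =
      ∑ p, ∑ q, b p * conj (b' q) *
        codeACCF (Cs p) (Ds q) (τ - Roff L n p + Roff L n q) := by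
  simp only [codeACCF, accf_Rmat, Finset.mul_sum]
  rw [Finset.sum_comm]
  exact Finset.sum_congr rfl fun p _ => Finset.sum_comm

end Rmat

/-- For `X = [0^{n₁} ∥ b₁·A ∥ 0^{n₂} ∥ b₂·C ∥ 0^{n₃}]` and
`Y = [0^{n₁} ∥ b₁'·B ∥ 0^{n₂} ∥ b₂'·D ∥ 0^{n₃}]` (both `M × (2L+n₁+n₂+n₃)` matrices):
`C(X,Y)(τ) = b₁·conj(b₁')·C(A,B)(τ) + b₂·conj(b₂')·C(C,D)(τ)
  + b₂·conj(b₁')·C(C,B)(τ−L−n₂) + b₁·conj(b₂')·C(A,D)(τ+L+n₂)`. -/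
theorem codeACCF_Rmat_two_blocks {M L : ℕ} (A B C D : Fin M → Fin L → ℂ)
    (b₁ b₂ b₁' b₂' : ℂ) (n₁ n₂ n₃ : ℕ) (τ : ℤ) :
    codeACCF (Rmat ![A, C] ![b₁, b₂] ![n₁, n₂, n₃])
        (Rmat ![B, D] ![b₁', b₂'] ![n₁, n₂, n₃]) τ =
      b₁ * conj b₁' * codeACCF A B τ + b₂ * conj b₂' * codeACCF C D τ +
      b₂ * conj b₁' * codeACCF C B (τ - (L : ℤ) - (n₂ : ℤ)) +
      b₁ * conj b₂' * codeACCF A D (τ + (L : ℤ) + (n₂ : ℤ)) := by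
  have hRoff₀ : Roff L ![n₁, n₂, n₃] 0 = n₁ := by simp [Roff]
  have hRoff₁ : Roff L ![n₁, n₂, n₃] 1 = n₁ + n₂ + L := by simp [Roff, Fin.sum_univ_three]
  simp only [codeACCF_Rmat, Fin.sum_univ_two, hRoff₀, hRoff₁]
  push_cast
  rw [sub_add_cancel, sub_add_cancel, show τ - n₁ + (n₁ + n₂ + L) = τ + L + n₂ by ring,
    show τ - (n₁ + n₂ + L) + n₁ = τ - L - n₂ by ring]
  ring

end
end

section
/- Let {C_1,…,C_M} be an (M,L)-CCC, let P be a positive divisor of M, let b^1,…,b^P be unimodular MOSs of length P, and let n_1,…,n_{P+1} be nonnegative integers with sum n. For 0 ≤ ν < M/P and 1 ≤ μ ≤ P define B_{νP+μ} = R(C_{νP+1}, …, C_{(ν+1)P}; b^μ). Then for every t with 1 ≤ t ≤ M and every integer τ ≠ 0, the AACF of the constructed code satisfies C(B_t, B_t)(τ) = 0. -/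
open scoped BigOperators ComplexConjugate

noncomputable section

/-- Auxiliary: collapsing a sum over `Fin N` with a point condition on values. -/
lemma sum_fin_ite {N : ℕ} (c : ℕ) (hc : c < N) (f : Fin N → ℂ) :
    ∑ x : Fin N, (if (x : ℕ) = c then f x else 0) = f ⟨c, hc⟩ := by
  rw [Finset.sum_eq_single (⟨c, hc⟩ : Fin N)]
  · simp
  · intro x _ hx
    rw [if_neg]
    exact fun h => hx (Fin.ext h)
  · intro h; exact absurd (Finset.mem_univ _) h

lemma zext_eq_sum {L : ℕ} (a : Fin L → ℂ) (i : ℤ) :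
    zext a i = ∑ y : Fin L, if (y : ℤ) = i then a y else 0 := by
  by_cases h : 0 ≤ i ∧ i < (L : ℤ)
  · rw [zext, dif_pos h]
    rw [Finset.sum_eq_single (⟨i.toNat, by omega⟩ : Fin L)]
    · rw [if_pos (by simp [Int.toNat_of_nonneg h.1])]
    · intro y _ hy
      rw [if_neg]
      intro hyi
      have hyi' : ((y : ℕ) : ℤ) = i := by exact_mod_cast hyi
      exact hy (Fin.ext (show (y : ℕ) = i.toNat by omega))
    · intro h'; exact absurd (Finset.mem_univ _) h'
  · rw [zext, dif_neg h]
    symm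
    apply Finset.sum_eq_zero
    intro y _
    rw [if_neg]
    intro hy
    have hyi' : ((y : ℕ) : ℤ) = i := by exact_mod_cast hy
    have := y.isLt
    apply h
    constructor <;> omega

lemma Roff_add_lt {P L : ℕ} (n : Fin (P + 1) → ℕ) (p : Fin P) (j : Fin L) :
    Roff L n p + (j : ℕ) < P * L + ∑ i, n i := by
  have h1 : (∑ i : Fin (P + 1), if (i : ℕ) ≤ (p : ℕ) then n i else 0) ≤ ∑ i, n i :=
    Finset.sum_le_sum fun i _ => by split <;> omega
  have h2 : (p : ℕ) * L + (j : ℕ) < P * L := by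
    have hj : (j : ℕ) < L := j.isLt
    have hp : (p : ℕ) + 1 ≤ P := p.isLt
    nlinarith
  unfold Roff
  omega

lemma zext_rmat {M L P : ℕ} (Cs : Fin P → Fin M → Fin L → ℂ) (β : Fin P → ℂ)
    (n : Fin (P + 1) → ℕ) (r : Fin M) (z : ℤ) :
    zext (Rmat Cs β n r) z =
      ∑ p : Fin P, ∑ j : Fin L,
        if ((Roff L n p + (j : ℕ) : ℕ) : ℤ) = z then β p * Cs p r j else 0 := by
  rw [zext_eq_sum]
  have key : ∀ y : Fin (P * L + ∑ i, n i),
      (if ((y : ℤ) = z) then Rmat Cs β n r y else 0) =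
      ∑ p : Fin P, ∑ j : Fin L,
        if (y : ℕ) = Roff L n p + (j : ℕ) then
          (if ((y : ℤ) = z) then β p * Cs p r j else 0) else 0 := by
    intro y
    by_cases h : (y : ℤ) = z
    · simp only [if_pos h, Rmat]
    · simp [h]
  rw [Finset.sum_congr rfl fun y _ => key y]
  rw [Finset.sum_comm]
  refine Finset.sum_congr rfl fun p _ => ?_
  rw [Finset.sum_comm]
  refine Finset.sum_congr rfl fun j _ => ?_
  rw [sum_fin_ite (Roff L n p + (j : ℕ)) (Roff_add_lt n p j)
    (fun y => if ((y : ℤ) = z) then β p * Cs p r j else 0)]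

lemma ite_mul_ite_zero (C1 C2 : Prop) [Decidable C1] [Decidable C2] (a b : ℂ) :
    (if C1 then a else 0) * (if C2 then b else 0) =
      if C2 then (if C1 then a * b else 0) else 0 := by
  split_ifs <;> simp

lemma codeACCF_rmat {M L P : ℕ} (Cs : Fin P → Fin M → Fin L → ℂ) (β : Fin P → ℂ)
    (n : Fin (P + 1) → ℕ) (τ : ℤ) :
    codeACCF (Rmat Cs β n) (Rmat Cs β n) τ =
      ∑ p₁ : Fin P, ∑ p₂ : Fin P, (β p₁ * conj (β p₂)) *
        codeACCF (Cs p₁) (Cs p₂) (τ + (Roff L n p₂ : ℤ) - (Roff L n p₁ : ℤ)) := by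
  have lhs_eq : codeACCF (Rmat Cs β n) (Rmat Cs β n) τ =
      ∑ r : Fin M, ∑ p₁ : Fin P, ∑ j₁ : Fin L, ∑ p₂ : Fin P, ∑ j₂ : Fin L,
        if ((Roff L n p₁ + (j₁ : ℕ) : ℕ) : ℤ) = ((Roff L n p₂ + (j₂ : ℕ) : ℕ) : ℤ) + τ then
          β p₁ * Cs p₁ r j₁ * (conj (β p₂) * conj (Cs p₂ r j₂)) else 0 := by
    unfold codeACCF accf
    refine Finset.sum_congr rfl fun r _ => ?_
    have step1 : ∀ x : Fin (P * L + ∑ i, n i),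
        zext (Rmat Cs β n r) ((x : ℤ) + τ) * conj (Rmat Cs β n r x) =
        ∑ p₁ : Fin P, ∑ j₁ : Fin L, ∑ p₂ : Fin P, ∑ j₂ : Fin L,
          if (x : ℕ) = Roff L n p₂ + (j₂ : ℕ) then
            (if ((Roff L n p₁ + (j₁ : ℕ) : ℕ) : ℤ) = (x : ℤ) + τ then
              β p₁ * Cs p₁ r j₁ * (conj (β p₂) * conj (Cs p₂ r j₂)) else 0) else 0 := by
      intro x
      rw [zext_rmat]
      have hconj : conj (Rmat Cs β n r x) =
          ∑ p₂ : Fin P, ∑ j₂ : Fin L,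
            if (x : ℕ) = Roff L n p₂ + (j₂ : ℕ) then conj (β p₂) * conj (Cs p₂ r j₂) else 0 := by
        simp [Rmat, map_sum, apply_ite (starRingEnd ℂ)]
      rw [hconj]
      rw [Finset.sum_mul]
      refine Finset.sum_congr rfl fun p₁ _ => ?_
      rw [Finset.sum_mul]
      refine Finset.sum_congr rfl fun j₁ _ => ?_
      rw [Finset.mul_sum]
      refine Finset.sum_congr rfl fun p₂ _ => ?_
      rw [Finset.mul_sum]
      refine Finset.sum_congr rfl fun j₂ _ => ?_
      rw [ite_mul_ite_zero]
    rw [Finset.sum_congr rfl fun x _ => step1 x]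
    rw [Finset.sum_comm]
    refine Finset.sum_congr rfl fun p₁ _ => ?_
    rw [Finset.sum_comm]
    refine Finset.sum_congr rfl fun j₁ _ => ?_
    rw [Finset.sum_comm]
    refine Finset.sum_congr rfl fun p₂ _ => ?_
    rw [Finset.sum_comm]
    refine Finset.sum_congr rfl fun j₂ _ => ?_
    rw [sum_fin_ite (Roff L n p₂ + (j₂ : ℕ)) (Roff_add_lt n p₂ j₂)
      (fun x => if ((Roff L n p₁ + (j₁ : ℕ) : ℕ) : ℤ) = (x : ℤ) + τ then
        β p₁ * Cs p₁ r j₁ * (conj (β p₂) * conj (Cs p₂ r j₂)) else 0)]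
  rw [lhs_eq]
  have rhs_eq : ∀ p₁ p₂ : Fin P, (β p₁ * conj (β p₂)) *
      codeACCF (Cs p₁) (Cs p₂) (τ + (Roff L n p₂ : ℤ) - (Roff L n p₁ : ℤ)) =
      ∑ r : Fin M, ∑ j₂ : Fin L, ∑ j₁ : Fin L,
        if ((Roff L n p₁ + (j₁ : ℕ) : ℕ) : ℤ) = ((Roff L n p₂ + (j₂ : ℕ) : ℕ) : ℤ) + τ then
          β p₁ * Cs p₁ r j₁ * (conj (β p₂) * conj (Cs p₂ r j₂)) else 0 := by
    intro p₁ p₂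
    unfold codeACCF accf
    rw [Finset.mul_sum]
    refine Finset.sum_congr rfl fun r _ => ?_
    rw [Finset.mul_sum]
    refine Finset.sum_congr rfl fun j₂ _ => ?_
    rw [zext_eq_sum, Finset.sum_mul, Finset.mul_sum]
    refine Finset.sum_congr rfl fun j₁ _ => ?_
    rw [ite_mul, zero_mul, mul_ite, mul_zero]
    refine if_congr ?_ (by ring) rfl
    constructor <;> intro h <;> [push_cast at h ⊢; push_cast at h ⊢] <;> omega
  rw [Finset.sum_congr rfl fun p₁ _ => Finset.sum_congr rfl fun p₂ _ => rhs_eq p₁ p₂]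
  rw [Finset.sum_comm]
  refine Finset.sum_congr rfl fun p₁ _ => ?_
  refine Eq.trans (Finset.sum_congr rfl fun r _ => ?_) Finset.sum_comm
  rw [Finset.sum_comm]
  refine Finset.sum_congr rfl fun p₂ _ => ?_
  rw [Finset.sum_comm]

/-- In the construction of Theorem 1, every constructed code `B_t` has
vanishing AACF at all nonzero shifts: `C(B_t, B_t)(τ) = 0` for all `τ ≠ 0`. -/
theorem snc_ccc_aacf_vanishes {M L P : ℕ} (hPpos : 0 < P) (hP : P ∣ M)
    (C : Fin M → Fin M → Fin L → ℂ) (hC : IsCCC C)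
    (bs : Fin P → Fin P → ℂ)
    (hMOS : ∀ μ₁ μ₂ : Fin P, μ₁ ≠ μ₂ → ∑ i : Fin P, bs μ₁ i * conj (bs μ₂ i) = 0)
    (hUni : ∀ μ i : Fin P, ‖bs μ i‖ = 1)
    (n : Fin (P + 1) → ℕ)
    (Bc : Fin M → Fin M → Fin (P * L + ∑ i, n i) → ℂ)
    (hB : ∀ t : Fin M,
      Bc t = Rmat (fun p => C (blockIdx hP t p)) (bs ⟨(t : ℕ) % P, Nat.mod_lt _ hPpos⟩) n) :
    ∀ t : Fin M, ∀ τ : ℤ, τ ≠ 0 → codeACCF (Bc t) (Bc t) τ = 0 := by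
  intro t τ hτ
  rw [hB t, codeACCF_rmat]
  refine Finset.sum_eq_zero fun p₁ _ => Finset.sum_eq_zero fun p₂ _ => ?_
  have hz : codeACCF (C (blockIdx hP t p₁)) (C (blockIdx hP t p₂))
      (τ + (Roff L n p₂ : ℤ) - (Roff L n p₁ : ℤ)) = 0 := by
    apply hC.1
    by_cases hp : p₁ = p₂
    · subst hp
      right
      intro h
      exact hτ (by omega)
    · left
      intro h
      apply hp
      have hv := congrArg Fin.val h
      simp only [blockIdx] at hv
      exact Fin.ext (by omega)
  rw [hz, mul_zero]


end
end
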